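/- arXiv:1307.4330 — 4 statements merged into one kernel-verified Lean document; each statement's English description precedes it below -/
import Mathlib

section
/- (Weak-intrusivity property.) Suppose there exist real coefficients γ_{l,k}, 1 ≤ l, k ≤ d, such that q_k(x) = Σ_{l=1}^d γ_{l,k} g(μ_l, x) for every 1 ≤ k ≤ d and every x ∈ Ω, and define η_m(μ) := Σ_{l=1}^d γ_{m,l} λ_l(μ). Then for every μ ∈ P, Σ_{m=1}^d λ_m(μ) M_m = Σ_{m=1}^d η_m(μ) A^1_{μ_m}; in particular, for P ⊆ ℝ and any fixed n×n real matrix A^0, Σ_{m=1}^d λ_m(μ) M_m + μ A^0 = Σ_{m=1}^d η_m(μ) A^1_{μ_m} + μ A^0, i.e. the EIM approximation of A_μ = A^1_μ + μ A^0 can be written using only the assembled matrices A^1_{μ_m} at the selected parameters. -/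
open Finset

theorem Finset.sum_smul_eq_sum_smul_of_eq_sum_smul {R M ι κ : Type*} [CommSemiring R]
    [AddCommMonoid M] [Module R M] [Fintype ι] [Fintype κ]
    (q : ι → M) (f : κ → M) (γ : κ → ι → R) (hq : ∀ k, q k = ∑ l, γ l k • f l) (c : ι → R) :
    ∑ m, c m • q m = ∑ l, (∑ m, γ l m * c m) • f l := by
  simp only [hq, smul_sum, smul_smul, sum_smul]
  rw [sum_comm]
  simp only [mul_comm]

theorem stmt_3_general {Ω : Type*} (P : Set ℝ)
    (d : ℕ)
    (μs : Fin d → P) (g : P → Ω → ℝ)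
    (q : Fin d → Ω → ℝ)
    (lam : P → Fin d → ℝ)
    (n : ℕ)
    (L : (Ω → ℝ) →ₗ[ℝ] Matrix (Fin n) (Fin n) ℝ)
    (A1 : P → Matrix (Fin n) (Fin n) ℝ)
    (hA1 : ∀ ν : P, A1 ν = L (fun y => g ν y))
    (M : Fin d → Matrix (Fin n) (Fin n) ℝ)
    (hM : ∀ m : Fin d, M m = L (q m))
    (γ : Fin d → Fin d → ℝ)
    (hq : ∀ (k : Fin d) (y : Ω), q k y = ∑ l, γ l k * g (μs l) y)
    (η : P → Fin d → ℝ)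
    (hη : ∀ (μ : P) (m : Fin d), η μ m = ∑ l, γ m l * lam μ l)
    (A0 : Matrix (Fin n) (Fin n) ℝ) :
    ∀ μ : P,
      (∑ m, lam μ m • M m = ∑ m, η μ m • A1 (μs m)) ∧
      (∑ m, lam μ m • M m + (μ : ℝ) • A0 =
        ∑ m, η μ m • A1 (μs m) + (μ : ℝ) • A0) := by
  intro μ
  have hq_comb : ∀ k, q k = ∑ l, γ l k • g (μs l) := fun k ↦ by
    ext y
    simp [hq]
  have hcomb : ∑ m, lam μ m • q m = ∑ l, η μ l • g (μs l) := by
    simp only [sum_smul_eq_sum_smul_of_eq_sum_smul q _ γ hq_comb, hη]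
  have key : ∑ m, lam μ m • M m = ∑ m, η μ m • A1 (μs m) := by
    simp only [hM, hA1, ← map_smul, ← map_sum, hcomb]
  exact ⟨key, by rw [key]⟩

/-- Weak-intrusivity property: the EIM approximation `Σ_m λ_m(μ) M_m` of `A¹_μ` can be
rewritten as `Σ_m η_m(μ) A¹_{μ_m}` using only assembled matrices at the selected
parameters; in particular (for `P ⊆ ℝ`) the approximation of `A_μ = A¹_μ + μ A⁰` can be
written `Σ_m η_m(μ) A¹_{μ_m} + μ A⁰`. -/
theorem stmt_3 {Ω : Type*} [Nonempty Ω] (P : Set ℝ) [Nonempty P]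
    (d : ℕ) (hd : 1 ≤ d)
    (x : Fin d → Ω) (μs : Fin d → P) (g : P → Ω → ℝ)
    (q : Fin d → Ω → ℝ)
    (B : Matrix (Fin d) (Fin d) ℝ)
    (hB : ∀ l m, B l m = q m (x l))
    (hBinv : IsUnit B)
    (lam : P → Fin d → ℝ)
    (hlam : ∀ μ l, ∑ m, B l m * lam μ m = g μ (x l))
    (n : ℕ) (hn : 1 ≤ n)
    (L : (Ω → ℝ) →ₗ[ℝ] Matrix (Fin n) (Fin n) ℝ)
    (A1 : P → Matrix (Fin n) (Fin n) ℝ)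
    (hA1 : ∀ ν : P, A1 ν = L (fun y => g ν y))
    (M : Fin d → Matrix (Fin n) (Fin n) ℝ)
    (hM : ∀ m : Fin d, M m = L (q m))
    (γ : Fin d → Fin d → ℝ)
    (hq : ∀ (k : Fin d) (y : Ω), q k y = ∑ l, γ l k * g (μs l) y)
    (η : P → Fin d → ℝ)
    (hη : ∀ (μ : P) (m : Fin d), η μ m = ∑ l, γ m l * lam μ l)
    (A0 : Matrix (Fin n) (Fin n) ℝ) :
    ∀ μ : P,
      (∑ m, lam μ m • M m = ∑ m, η μ m • A1 (μs m)) ∧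
      (∑ m, lam μ m • M m + (μ : ℝ) • A0 =
        ∑ m, η μ m • A1 (μs m) + (μ : ℝ) • A0) :=
  stmt_3_general P d μs g q lam n L A1 hA1 M hM γ hq η hη A0
end

section
/- (Exact nonintrusive separated representation.) If for every 1 ≤ p ≤ d_max the function z_p : P → ℝ lies in the linear span of q^z_1, …, q^z_{d^z}, then for every μ ∈ P, A_μ = Σ_{m=1}^{d^z} β_m(μ) A_{μ^z_m}; i.e. the parameter-dependent matrix is exactly a linear combination of its snapshots at the selected parameters μ^z_1,…,μ^z_{d^z}. -/
/-! Evaluation at `μ` and the interpolation `f ↦ Σ_m β_m(μ) f(μ^z_m)` are linear functionals that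
agree on every `q^z_l` (this is the defining system of `β(μ)`), hence on their span, which contains
every coefficient `z_p`. Since `A_μ` depends linearly on the coefficients `z_p(μ)`, the
interpolation identity passes to the matrices. -/

theorem apply_eq_sum_mul_apply_of_mem_span {R P ι : Type*} [CommRing R] [Fintype ι]
    {q : ι → P → R} {x : P} {nodes : ι → P} {w : ι → R}
    (hw : ∀ l, ∑ m, w m * q l (nodes m) = q l x) {f : P → R}
    (hf : f ∈ Submodule.span R (Set.range q)) :
    f x = ∑ m, w m * f (nodes m) := by
  let L : (P → R) →ₗ[R] R := LinearMap.proj x - ∑ m, w m • LinearMap.proj (nodes m)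
  have hL : ∀ g, L g = g x - ∑ m, w m * g (nodes m) := fun g => by simp [L]
  have hspan_le : Submodule.span R (Set.range q) ≤ LinearMap.ker L := by
    rw [Submodule.span_le]
    rintro _ ⟨l, rfl⟩
    simp [hL, hw]
  exact sub_eq_zero.mp ((hL f).symm.trans (hspan_le hf))

theorem sum_smul_eq_sum_smul_sum_smul {R P ι κ M : Type*} [CommSemiring R] [AddCommMonoid M]
    [Module R M] [Fintype ι] [Fintype κ] (z : κ → P → R) (T : κ → M) {x : P} {nodes : ι → P}
    {w : ι → R} (hz : ∀ p, z p x = ∑ m, w m * z p (nodes m)) :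
    ∑ p, z p x • T p = ∑ m, w m • ∑ p, z p (nodes m) • T p := by
  simp_rw [hz, Finset.sum_smul, Finset.smul_sum, mul_smul]
  exact Finset.sum_comm

theorem stmt_9_general {P : Type*}
    (dmax : ℕ) (n : ℕ)
    (z : Fin dmax → P → ℝ)
    (T : Fin dmax → Matrix (Fin n) (Fin n) ℝ)
    (A : P → Matrix (Fin n) (Fin n) ℝ)
    (hA : ∀ ν : P, A ν = ∑ p, z p ν • T p)
    (dz : ℕ)
    (qz : Fin dz → P → ℝ) (μz : Fin dz → P)
    (Bz : Matrix (Fin dz) (Fin dz) ℝ)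
    (hBz : ∀ m l, Bz m l = qz l (μz m))
    (β : P → Fin dz → ℝ)
    (hβ : ∀ (μ : P) (l : Fin dz), ∑ m, Bz m l * β μ m = qz l μ)
    (hspan : ∀ p : Fin dmax, z p ∈ Submodule.span ℝ (Set.range qz)) :
    ∀ μ : P, A μ = ∑ m, β μ m • A (μz m) := by
  intro μ
  have hinterp : ∀ p, z p μ = ∑ m, β μ m * z p (μz m) := fun p =>
    apply_eq_sum_mul_apply_of_mem_span
      (fun l => by simpa only [hBz, mul_comm] using hβ μ l) (hspan p)
  simp only [hA]
  exact sum_smul_eq_sum_smul_sum_smul z T hinterp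

/-- Exact nonintrusive separated representation: if every coefficient function `z_p`
lies in the span of the `q^z` functions, then `A_μ = Σ_m β_m(μ) A_{μ^z_m}`. -/
theorem stmt_9 {P : Type*} [Nonempty P]
    (dmax : ℕ) (hdmax : 1 ≤ dmax) (n : ℕ) (hn : 1 ≤ n)
    (z : Fin dmax → P → ℝ)
    (T : Fin dmax → Matrix (Fin n) (Fin n) ℝ)
    (A : P → Matrix (Fin n) (Fin n) ℝ)
    (hA : ∀ ν : P, A ν = ∑ p, z p ν • T p)
    (dz : ℕ) (hdz : 1 ≤ dz)
    (qz : Fin dz → P → ℝ) (μz : Fin dz → P)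
    (Bz : Matrix (Fin dz) (Fin dz) ℝ)
    (hBz : ∀ m l, Bz m l = qz l (μz m))
    (hBzinv : IsUnit Bz)
    (β : P → Fin dz → ℝ)
    (hβ : ∀ (μ : P) (l : Fin dz), ∑ m, Bz m l * β μ m = qz l μ)
    (hspan : ∀ p : Fin dmax, z p ∈ Submodule.span ℝ (Set.range qz)) :
    ∀ μ : P, A μ = ∑ m, β μ m • A (μz m) :=
  stmt_9_general dmax n z T A hA dz qz μz Bz hBz β hβ hspan
end

section
/- (Structure of the EIM under the greedy recursion.) Assume the recursive EIM construction is well defined: r_1 := g(μ_1, x_1) ≠ 0 and q_1 := g(μ_1,·)/r_1; and, for each 1 ≤ k < d, assuming the k×k matrix B_k := (q_m(x_l))_{1≤l,m≤k} is invertible, the level-k interpolant is (I_k g)(μ,x) := Σ_{m=1}^k λ^{(k)}_m(μ) q_m(x), where λ^{(k)}(μ) solves Σ_{m=1}^k (B_k)_{l,m} λ^{(k)}_m(μ) = g(μ, x_l) for 1 ≤ l ≤ k; the residual r_{k+1} := g(μ_{k+1}, x_{k+1}) − (I_k g)(μ_{k+1}, x_{k+1}) is nonzero, and q_{k+1} :=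 ( g(μ_{k+1},·) − (I_k g)(μ_{k+1},·) ) / r_{k+1}. Then for every 1 ≤ k ≤ d: (i) q_m(x_l) = 0 whenever l < m ≤ k and q_m(x_m) = 1 for every m ≤ k, so that B_k is lower triangular with unit diagonal, has determinant 1, and is invertible; and (ii) the interpolant matches g at the selected points: (I_k g)(μ, x_l) = g(μ, x_l) for every μ ∈ P and every 1 ≤ l ≤ k. -/
/-!
The interpolant `I_m g` reproduces `g` at `x_0, …, x_{m-1}` because its coefficients solve
the interpolation system there. Hence the normalized residual `q_m` vanishes at those points
and equals `1` at `x_m`, which makes `B_k` lower unitriangular.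
-/

theorem Matrix.det_eq_one_of_isLowerTriangular {m R : Type*} [CommRing R] [Fintype m]
    [DecidableEq m] [LinearOrder m] {M : Matrix m m R} (h : M.IsLowerTriangular)
    (hdiag : ∀ i, M i i = 1) : M.det = 1 := by
  rw [M.det_of_isLowerTriangular h]
  exact Finset.prod_eq_one fun i _ => hdiag i

section NormalizedResidual

variable {Ω K : Type*} [DivisionRing K] {f I q : Ω → K} {r : K}

theorem normalizedResidual_eq_zero (hq : ∀ y, q y = (f y - I y) / r) {y : Ω}
    (hy : I y = f y) : q y = 0 := by
  rw [hq, hy, sub_self, zero_div]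

theorem normalizedResidual_eq_one (hq : ∀ y, q y = (f y - I y) / r) {y : Ω}
    (hr : r = f y - I y) (hr0 : r ≠ 0) : q y = 1 := by
  rw [hq, ← hr, div_self hr0]

end NormalizedResidual

theorem stmt_10_general {Ω P : Type*}
    (g : P → Ω → ℝ) (d : ℕ)
    (x : ℕ → Ω) (μs : ℕ → P)
    (q : ℕ → Ω → ℝ) (r : ℕ → ℝ)
    (lam : ℕ → P → ℕ → ℝ) (Ik : ℕ → P → Ω → ℝ)
    -- initialization of the recursion
    (hr0 : r 0 = g (μs 0) (x 0))
    (hr0ne : r 0 ≠ 0)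
    (hq0 : ∀ y : Ω, q 0 y = g (μs 0) y / r 0)
    -- the level-k interpolant, with coefficients solving the interpolation system
    (hIk : ∀ (k : ℕ) (μ : P) (y : Ω),
      Ik k μ y = ∑ m ∈ Finset.range k, lam k μ m * q m y)
    (hlam : ∀ k, 1 ≤ k → k ≤ d → ∀ (μ : P), ∀ l < k,
      ∑ m ∈ Finset.range k, q m (x l) * lam k μ m = g μ (x l))
    -- the greedy recursion defining the residuals and next basis functions
    (hrec : ∀ k, 1 ≤ k → k < d →
      r k = g (μs k) (x k) - Ik k (μs k) (x k) ∧
      r k ≠ 0 ∧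
      ∀ y : Ω, q k y = (g (μs k) y - Ik k (μs k) y) / r k) :
    ∀ k, 1 ≤ k → k ≤ d →
      (∀ l m : ℕ, l < m → m < k → q m (x l) = 0) ∧
      (∀ m < k, q m (x m) = 1) ∧
      (Matrix.of (fun l m : Fin k => q (m : ℕ) (x (l : ℕ)))).det = 1 ∧
      IsUnit (Matrix.of (fun l m : Fin k => q (m : ℕ) (x (l : ℕ)))) ∧
      (∀ μ : P, ∀ l < k, Ik k μ (x l) = g μ (x l)) := by
  have hmatch : ∀ k, 1 ≤ k → k ≤ d → ∀ μ : P, ∀ l < k, Ik k μ (x l) = g μ (x l) := by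
    intro k hk hkd μ l hl
    rw [hIk, ← hlam k hk hkd μ l hl]
    exact Finset.sum_congr rfl fun m _ => mul_comm _ _
  have hzero : ∀ l m, l < m → m < d → q m (x l) = 0 := fun l m hlm hmd =>
    normalizedResidual_eq_zero (hrec m (by omega) hmd).2.2
      (hmatch m (by omega) hmd.le _ l hlm)
  have hone : ∀ m < d, q m (x m) = 1 := by
    rintro (_ | m) hm
    · rw [hq0, ← hr0, div_self hr0ne]
    · obtain ⟨hr, hr0, hq⟩ := hrec (m + 1) (by omega) hm
      exact normalizedResidual_eq_one hq hr hr0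
  intro k hk hkd
  have hdet : (Matrix.of (fun l m : Fin k => q (m : ℕ) (x (l : ℕ)))).det = 1 :=
    Matrix.det_eq_one_of_isLowerTriangular (fun l m hlm => hzero l m hlm (by omega))
      (fun m => hone m (by omega))
  exact ⟨fun l m hlm hmk => hzero l m hlm (by omega), fun m hmk => hone m (by omega), hdet,
    (Matrix.isUnit_iff_isUnit_det _).2 (hdet ▸ isUnit_one), hmatch k hk hkd⟩

/-- Structure of the EIM under the greedy recursion (0-indexed): for every level
`1 ≤ k ≤ d`, the basis functions satisfy `q_m(x_l) = 0` for `l < m < k` and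
`q_m(x_m) = 1` for `m < k`, so that the interpolation matrix `B_k` is lower triangular
with unit diagonal, has determinant `1`, and is invertible; moreover the level-`k`
interpolant matches `g` at the selected points. -/
theorem stmt_10 {Ω P : Type*} [Nonempty Ω] [Nonempty P]
    (g : P → Ω → ℝ) (d : ℕ) (hd : 1 ≤ d)
    (x : ℕ → Ω) (μs : ℕ → P)
    (q : ℕ → Ω → ℝ) (r : ℕ → ℝ)
    (lam : ℕ → P → ℕ → ℝ) (Ik : ℕ → P → Ω → ℝ)
    -- initialization of the recursion
    (hr0 : r 0 = g (μs 0) (x 0))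
    (hr0ne : r 0 ≠ 0)
    (hq0 : ∀ y : Ω, q 0 y = g (μs 0) y / r 0)
    -- the level-k interpolant, with coefficients solving the interpolation system
    (hIk : ∀ (k : ℕ) (μ : P) (y : Ω),
      Ik k μ y = ∑ m ∈ Finset.range k, lam k μ m * q m y)
    (hlam : ∀ k, 1 ≤ k → k ≤ d → ∀ (μ : P), ∀ l < k,
      ∑ m ∈ Finset.range k, q m (x l) * lam k μ m = g μ (x l))
    -- the greedy recursion defining the residuals and next basis functions
    (hrec : ∀ k, 1 ≤ k → k < d →
      r k = g (μs k) (x k) - Ik k (μs k) (x k) ∧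
      r k ≠ 0 ∧
      ∀ y : Ω, q k y = (g (μs k) y - Ik k (μs k) y) / r k) :
    ∀ k, 1 ≤ k → k ≤ d →
      (∀ l m : ℕ, l < m → m < k → q m (x l) = 0) ∧
      (∀ m < k, q m (x m) = 1) ∧
      (Matrix.of (fun l m : Fin k => q (m : ℕ) (x (l : ℕ)))).det = 1 ∧
      IsUnit (Matrix.of (fun l m : Fin k => q (m : ℕ) (x (l : ℕ)))) ∧
      (∀ μ : P, ∀ l < k, Ik k μ (x l) = g μ (x l)) :=
  stmt_10_general g d x μs q r lam Ik hr0 hr0ne hq0 hIk hlam hrec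
end

section
/- (Span equality for the EIM basis.) Under the recursive EIM construction (r_1 := g(μ_1, x_1) ≠ 0, q_1 := g(μ_1,·)/r_1, and for 1 ≤ k < d, with B_k := (q_m(x_l))_{1≤l,m≤k} invertible and (I_k g) the associated level-k interpolant, r_{k+1} := g(μ_{k+1}, x_{k+1}) − (I_k g)(μ_{k+1}, x_{k+1}) ≠ 0 and q_{k+1} := ( g(μ_{k+1},·) − (I_k g)(μ_{k+1},·) ) / r_{k+1}), for every 1 ≤ k ≤ d the linear span of q_1, …, q_k equals the linear span of g(μ_1,·), …, g(μ_k,·) in the space of functions Ω → ℝ. -/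
/-!
The recursion reads `g(μ_k, ·) - r_k q_k = (I_k g)(μ_k, ·) ∈ span {q_m | m < k}` with `r_k ≠ 0`
(and `I_0 g = 0`). So the snapshots are triangular in the `q`'s with nonzero
diagonal, and such a triangular change of generators preserves the span of every initial segment.
-/

open Submodule Set

section

variable {R M : Type*}

theorem Submodule.span_singleton_sup_le_of_sub_smul_mem [Semiring R] [AddCommGroup M] [Module R M]
    {x y : M} {S : Submodule R M} {c : R} (h : y - c • x ∈ S) :
    R ∙ y ⊔ S ≤ R ∙ x ⊔ S := by
  refine sup_le ((span_singleton_le_iff_mem _ _).2 ?_) le_sup_right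
  rw [← sub_add_cancel y (c • x)]
  exact add_mem (mem_sup_right h) (mem_sup_left (smul_mem _ _ (mem_span_singleton_self x)))

theorem Submodule.span_singleton_sup_eq_of_sub_smul_mem [DivisionRing R] [AddCommGroup M]
    [Module R M] {x y : M} {S : Submodule R M} {c : R} (hc : c ≠ 0) (h : y - c • x ∈ S) :
    R ∙ y ⊔ S = R ∙ x ⊔ S := by
  refine le_antisymm (span_singleton_sup_le_of_sub_smul_mem h)
    (span_singleton_sup_le_of_sub_smul_mem (c := c⁻¹) ?_)
  have : x - c⁻¹ • y = -(c⁻¹ • (y - c • x)) := by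
    rw [smul_sub, smul_smul, inv_mul_cancel₀ hc, one_smul, neg_sub]
  rw [this]
  exact neg_mem (smul_mem _ _ h)

theorem Submodule.span_image_Iio_eq_of_sub_smul_mem [DivisionRing R] [AddCommGroup M]
    [Module R M] {u v : ℕ → M} {n : ℕ}
    (h : ∀ k < n, ∃ c : R, c ≠ 0 ∧ v k - c • u k ∈ span R (u '' Iio k)) :
    span R (u '' Iio n) = span R (v '' Iio n) := by
  induction n with
  | zero => simp
  | succ n ih =>
    have hIio : Iio (n + 1) = insert n (Iio n) := Order.Iio_succ_eq_insert n
    obtain ⟨c, hc, hsub⟩ := h n n.lt_succ_self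
    rw [hIio, image_insert_eq, image_insert_eq, span_insert, span_insert,
      ← ih fun k hk => h k (hk.trans n.lt_succ_self)]
    exact (span_singleton_sup_eq_of_sub_smul_mem hc hsub).symm

theorem Submodule.sum_range_smul_mem_span_image_Iio [Semiring R] [AddCommMonoid M] [Module R M]
    (a : ℕ → R) (u : ℕ → M) (n : ℕ) :
    ∑ m ∈ Finset.range n, a m • u m ∈ span R (u '' Iio n) :=
  sum_mem fun m hm => smul_mem _ _ (subset_span ⟨m, Finset.mem_range.1 hm, rfl⟩)

end

theorem stmt_11_general {Ω P : Type*}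
    (g : P → Ω → ℝ) (d : ℕ)
    (x : ℕ → Ω) (μs : ℕ → P)
    (q : ℕ → Ω → ℝ) (r : ℕ → ℝ)
    (lam : ℕ → P → ℕ → ℝ) (Ik : ℕ → P → Ω → ℝ)
    -- initialization of the recursion
    (hr0ne : r 0 ≠ 0)
    (hq0 : ∀ y : Ω, q 0 y = g (μs 0) y / r 0)
    -- the level-k interpolant, with coefficients solving the interpolation system
    (hIk : ∀ (k : ℕ) (μ : P) (y : Ω),
      Ik k μ y = ∑ m ∈ Finset.range k, lam k μ m * q m y)
    -- the greedy recursion defining the residuals and next basis functions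
    (hrec : ∀ k, 1 ≤ k → k < d →
      r k = g (μs k) (x k) - Ik k (μs k) (x k) ∧
      r k ≠ 0 ∧
      ∀ y : Ω, q k y = (g (μs k) y - Ik k (μs k) y) / r k) :
    ∀ k, 1 ≤ k → k ≤ d →
      Submodule.span ℝ (q '' Set.Iio k) =
        Submodule.span ℝ ((fun i => g (μs i)) '' Set.Iio k) := by
  intro k _ hkd
  refine span_image_Iio_eq_of_sub_smul_mem fun i hi => ⟨r i, ?_⟩
  rcases Nat.eq_zero_or_pos i with rfl | hi0
  · have hg0 : g (μs 0) = r 0 • q 0 := funext fun y => by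
      rw [Pi.smul_apply, hq0, smul_eq_mul, mul_div_cancel₀ _ hr0ne]
    exact ⟨hr0ne, by simp [hg0]⟩
  · obtain ⟨-, hri, hqi⟩ := hrec i hi0 (by omega)
    have hgi : g (μs i) - r i • q i = ∑ m ∈ Finset.range i, lam i (μs i) m • q m :=
      funext fun y => by
        simp only [Pi.sub_apply, Pi.smul_apply, smul_eq_mul, hqi, Finset.sum_apply, ← hIk]
        rw [mul_div_cancel₀ _ hri]
        ring
    exact ⟨hri, hgi ▸ sum_range_smul_mem_span_image_Iio _ _ _⟩

/-- Span equality for the EIM basis (0-indexed): under the greedy recursion, for every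
`1 ≤ k ≤ d`, the span of `q_0, …, q_{k-1}` equals the span of the snapshots
`g(μ_0,·), …, g(μ_{k-1},·)` in the space of functions `Ω → ℝ`. -/
theorem stmt_11 {Ω P : Type*} [Nonempty Ω] [Nonempty P]
    (g : P → Ω → ℝ) (d : ℕ) (hd : 1 ≤ d)
    (x : ℕ → Ω) (μs : ℕ → P)
    (q : ℕ → Ω → ℝ) (r : ℕ → ℝ)
    (lam : ℕ → P → ℕ → ℝ) (Ik : ℕ → P → Ω → ℝ)
    -- initialization of the recursion
    (hr0 : r 0 = g (μs 0) (x 0))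
    (hr0ne : r 0 ≠ 0)
    (hq0 : ∀ y : Ω, q 0 y = g (μs 0) y / r 0)
    -- the level-k interpolant, with coefficients solving the interpolation system
    (hIk : ∀ (k : ℕ) (μ : P) (y : Ω),
      Ik k μ y = ∑ m ∈ Finset.range k, lam k μ m * q m y)
    (hlam : ∀ k, 1 ≤ k → k ≤ d → ∀ (μ : P), ∀ l < k,
      ∑ m ∈ Finset.range k, q m (x l) * lam k μ m = g μ (x l))
    -- invertibility of the level-k interpolation matrices
    (hBk : ∀ k, 1 ≤ k → k ≤ d →
      IsUnit (Matrix.of (fun l m : Fin k => q (m : ℕ) (x (l : ℕ)))))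
    -- the greedy recursion defining the residuals and next basis functions
    (hrec : ∀ k, 1 ≤ k → k < d →
      r k = g (μs k) (x k) - Ik k (μs k) (x k) ∧
      r k ≠ 0 ∧
      ∀ y : Ω, q k y = (g (μs k) y - Ik k (μs k) y) / r k) :
    ∀ k, 1 ≤ k → k ≤ d →
      Submodule.span ℝ (q '' Set.Iio k) =
        Submodule.span ℝ ((fun i => g (μs i)) '' Set.Iio k) :=
  stmt_11_general g d x μs q r lam Ik hr0ne hq0 hIk hrec
end
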